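/- arXiv:1806.10544 — 2 statements merged into one kernel-verified Lean document; each statement's English description precedes it below -/
import Mathlib

section
/- Let F be a field, A ∈ F^{n×n}, B ∈ F^{n×m}, C ∈ F^{m×n}, and assume: the n×nm matrix [B, AB, A^2B, …, A^{n−1}B] has rank n; the nm×n matrix obtained by stacking C, CA, CA^2, …, CA^{n−1} has rank n; and G_sp(λ) := C(λI_n − A)^{−1}B ∈ F(λ)^{m×m} is symmetric over F(λ). Then there exist W ∈ F^{m×n} and symmetric matrices S_1, S_2 ∈ F^{n×n} with S_1 nonsingular such that C(λI_n − A)^{−1}B = W(λS_1 − S_2)^{−1}W^T over F(λ); that is, G_sp(λ) admits a symmetric minimal state-space realization. -/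
/-
A symmetric transfer matrix has symmetric Markov parameters `C Aᵏ B`: the matrices
`Mₖ = C (λ - A)⁻¹ Aᵏ B` satisfy `C Aᵏ B = λ Mₖ - Mₖ₊₁` and are strictly proper (their entries
are small for the valuation at infinity), so symmetry propagates from `M₀ = G` to every `Mₖ`
and every `C Aᵏ B`. Hence the Hankel products `O K` and `O A K` of the observability and
controllability matrices are symmetric, and with a right inverse `K'` of `K` the matrix
`T = K'ᵀ O` is symmetric, invertible, and satisfies `T A = Aᵀ T`, `T B = Cᵀ`. Then
`λT - TA = T (λ - A)` gives `C (λ - A)⁻¹ B = C (λT - TA)⁻¹ Cᵀ`.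
-/

open Matrix

/-- The matrix `(λ I_n − A)⁻¹` over the field of rational functions. -/
noncomputable def lamResolvent {F : Type*} [Field F] {n : ℕ} (A : Matrix (Fin n) (Fin n) F) :
    Matrix (Fin n) (Fin n) (RatFunc F) :=
  (Matrix.diagonal (fun _ => (RatFunc.X : RatFunc F)) - A.map (algebraMap F (RatFunc F)))⁻¹

/-- The matrix `(λ S₁ − S₂)⁻¹` over the field of rational functions. -/
noncomputable def pencilResolvent {F : Type*} [Field F] {n : ℕ}
    (S₁ S₂ : Matrix (Fin n) (Fin n) F) : Matrix (Fin n) (Fin n) (RatFunc F) :=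
  (Matrix.of (fun i j => (RatFunc.X : RatFunc F) * algebraMap F (RatFunc F) (S₁ i j)
      - algebraMap F (RatFunc F) (S₂ i j)))⁻¹

/-- The controllability matrix `[B, AB, A²B, …, A^{n−1}B]`. -/
def ctrbMat {F : Type*} [Field F] {n m : ℕ} (A : Matrix (Fin n) (Fin n) F)
    (B : Matrix (Fin n) (Fin m) F) : Matrix (Fin n) (Fin n × Fin m) F :=
  Matrix.of fun r p => (A ^ (p.1 : ℕ) * B) r p.2

/-- The observability matrix obtained by stacking `C, CA, CA², …, CA^{n−1}`. -/
def obsvMat {F : Type*} [Field F] {n m : ℕ} (A : Matrix (Fin n) (Fin n) F)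
    (C : Matrix (Fin m) (Fin n) F) : Matrix (Fin n × Fin m) (Fin n) F :=
  Matrix.of fun p c => (C * A ^ (p.1 : ℕ)) p.2 c

namespace Matrix

theorem exists_mul_eq_one_of_rank_eq_card {K : Type*} [Field K] {m n : Type*} [Fintype m]
    [Fintype n] [DecidableEq m] (M : Matrix m n K) (h : M.rank = Fintype.card m) :
    ∃ N : Matrix n m K, M * N = 1 := by
  classical
  have hsurj : LinearMap.range M.mulVecLin = ⊤ :=
    Submodule.eq_top_of_finrank_eq (by rw [← Matrix.rank, h, Module.finrank_fintype_fun_eq_card])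
  obtain ⟨g, hg⟩ := M.mulVecLin.exists_rightInverse_of_surjective hsurj
  refine ⟨LinearMap.toMatrix' g, ?_⟩
  rw [← LinearMap.toMatrix'_toLin' M, ← LinearMap.toMatrix'_comp]
  simp [Matrix.toLin'_apply', hg]

end Matrix

namespace Valuation

variable {K Γ₀ : Type*} [Field K] [LinearOrderedCommGroupWithZero Γ₀] (v : Valuation K Γ₀)
  {ι : Type*} [Fintype ι]

theorem map_mul_apply_lt_one_of_le_one_of_lt_one {l m : Type*}
    {P : Matrix l ι K} {Q : Matrix ι m K} (hP : ∀ i j, v (P i j) ≤ 1) (hQ : ∀ i j, v (Q i j) < 1)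
    (i : l) (j : m) :
    v ((P * Q) i j) < 1 :=
  v.map_sum_lt one_ne_zero fun k _ => by
    rw [v.map_mul]; exact (mul_le_of_le_one_left' (hP i k)).trans_lt (hQ k j)

theorem map_mul_apply_lt_one_of_lt_one_of_le_one {l m : Type*}
    {P : Matrix l ι K} {Q : Matrix ι m K} (hP : ∀ i j, v (P i j) < 1) (hQ : ∀ i j, v (Q i j) ≤ 1)
    (i : l) (j : m) :
    v ((P * Q) i j) < 1 :=
  v.map_sum_lt one_ne_zero fun k _ => by
    rw [v.map_mul]; exact (mul_le_of_le_one_right' (hQ k j)).trans_lt (hP i k)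

variable [DecidableEq ι]

theorem map_apply_lt_one_of_mul_diagonal_sub_eq_one {x : K} (hx : 1 < v x)
    {A R : Matrix ι ι K} (hA : ∀ i j, v (A i j) ≤ 1) (hR : R * (diagonal (fun _ => x) - A) = 1)
    (i j : ι) : v (R i j) < 1 := by
  by_contra! hij
  have : Nonempty (ι × ι) := ⟨(i, j)⟩
  obtain ⟨⟨a, b⟩, hmax⟩ := Finite.exists_max fun p : ι × ι => v (R p.1 p.2)
  have hbig : 1 ≤ v (R a b) := hij.trans (hmax (i, j))
  -- At an entry `R a b` of largest valuation, `x R = 1 + R A` forces `v x * v (R a b) ≤ v (R a b)`.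
  have hentry : R a b * x = (1 : Matrix ι ι K) a b + (R * A) a b := by
    rw [mul_sub, sub_eq_iff_eq_add] at hR
    simpa using congrFun (congrFun hR a) b
  have hle : v x * v (R a b) ≤ v (R a b) := by
    rw [mul_comm, ← v.map_mul, hentry]
    refine v.map_add_le ((?_ : v ((1 : Matrix ι ι K) a b) ≤ 1).trans hbig)
      (v.map_sum_le fun k _ => ?_)
    · rw [one_apply]; split_ifs <;> simp
    · rw [v.map_mul]
      exact (mul_le_of_le_one_right' (hA k b)).trans (hmax (a, k))
  exact hx.not_ge (le_of_mul_le_mul_right (by rwa [one_mul])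
    (lt_of_lt_of_le zero_lt_one hbig))

theorem eq_zero_of_map_algebraMap_lt_one {F : Type*} [Field F] [Algebra F K]
    [v.IsTrivialOn F] {c : F} (hc : v (algebraMap F K c) < 1) : c = 0 := by
  by_contra h
  exact hc.ne (IsTrivialOn.eq_one c h)

theorem transpose_mul_pow_mul_eq_self_of_resolvent {F : Type*} [Field F]
    [Algebra F K] [v.IsTrivialOn F] {x : K} (hx : 1 < v x) {κ : Type*} [Fintype κ]
    {A : Matrix ι ι F} {B : Matrix ι κ F} {C : Matrix κ ι F} {R : Matrix ι ι K}
    (hR : R * (diagonal (fun _ => x) - A.map (algebraMap F K)) = 1)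
    (hsym : (C.map (algebraMap F K) * R * B.map (algebraMap F K))ᵀ
      = C.map (algebraMap F K) * R * B.map (algebraMap F K)) (k : ℕ) :
    (C * A ^ k * B)ᵀ = C * A ^ k * B := by
  set φ := algebraMap F K
  let M : ℕ → Matrix κ κ K := fun k => C.map φ * R * (A ^ k * B).map φ
  have hφ : ∀ c : F, v (φ c) ≤ 1 := IsTrivialOn.valuation_algebraMap_le_one v
  have hM_lt : ∀ k i j, v (M k i j) < 1 := fun k =>
    v.map_mul_apply_lt_one_of_lt_one_of_le_one
      (v.map_mul_apply_lt_one_of_le_one_of_lt_one (fun _ _ => hφ _)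
        (v.map_apply_lt_one_of_mul_diagonal_sub_eq_one hx (fun _ _ => hφ _) hR))
      (fun _ _ => hφ _)
  -- `R A = x R - 1` turns the powers of `A` into the recursion `M (k+1) = x M k - C Aᵏ B`.
  have hM_succ : ∀ k, M (k + 1) = x • M k - (C * A ^ k * B).map φ := by
    intro k
    have hRA : R * A.map φ = x • R - 1 := by
      rw [← hR, mul_sub, ← smul_one_eq_diagonal, Matrix.mul_smul, mul_one, sub_sub_cancel]
    calc M (k + 1) = C.map φ * (R * A.map φ) * (A ^ k * B).map φ := by
          simp only [M, pow_succ', Matrix.mul_assoc, Matrix.map_mul]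
      _ = x • M k - (C * A ^ k * B).map φ := by
          simp only [hRA, Matrix.mul_sub, Matrix.sub_mul, Matrix.mul_one, Matrix.mul_smul,
            Matrix.smul_mul, M, Matrix.map_mul, Matrix.mul_assoc]
  -- The antisymmetric part of the constant matrix `C Aᵏ B` equals that of `M (k+1)`, whose
  -- entries have valuation `< 1`; so it vanishes.
  have hstep : ∀ k, (M k)ᵀ = M k →
      (C * A ^ k * B)ᵀ = C * A ^ k * B ∧ (M (k + 1))ᵀ = M (k + 1) := by
    intro k hk
    have hdiff : ((C * A ^ k * B)ᵀ - C * A ^ k * B).map φ = M (k + 1) - (M (k + 1))ᵀ := by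
      rw [Matrix.map_sub _ φ.map_sub, Matrix.transpose_map, hM_succ, Matrix.transpose_sub,
        Matrix.transpose_smul, hk]
      abel
    have hD : (C * A ^ k * B)ᵀ = C * A ^ k * B := by
      refine sub_eq_zero.mp (Matrix.ext fun i j => v.eq_zero_of_map_algebraMap_lt_one ?_)
      rw [← Matrix.map_apply (f := φ), hdiff]
      exact v.map_sub_lt (hM_lt _ i j) (hM_lt _ j i)
    exact ⟨hD, (sub_eq_zero.mp (by rw [← hdiff, hD, sub_self, Matrix.map_zero _ φ.map_zero])).symm⟩
  have hM_symm : ∀ k, (M k)ᵀ = M k := by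
    intro k
    induction k with
    | zero => simpa [M] using hsym
    | succ k ih => exact (hstep k ih).2
  exact (hstep k (hM_symm k)).1

end Valuation

theorem Matrix.exists_symm_intertwiner_of_hankel {R : Type*} [CommRing R] {ι κ μ : Type*}
    [Fintype ι] [Fintype κ] [DecidableEq ι]
    {A : Matrix ι ι R} {B : Matrix ι μ R} {C : Matrix μ ι R} {O : Matrix κ ι R}
    {K : Matrix ι κ R} {K' : Matrix κ ι R} {O' : Matrix κ ι R} (hK : K * K' = 1)
    (hO : Oᵀ * O' = 1) (hOK : (O * K)ᵀ = O * K) (hOAK : (O * A * K)ᵀ = O * A * K)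
    (hOB : O * B = Kᵀ * Cᵀ) :
    ∃ T : Matrix ι ι R, Tᵀ = T ∧ IsUnit T.det ∧ T * A = Aᵀ * T ∧ T * B = Cᵀ := by
  have hK't : K'ᵀ * Kᵀ = 1 := by rw [← transpose_mul, hK, transpose_one]
  set T := K'ᵀ * O
  have hTK : T * K = Oᵀ := by
    rw [Matrix.mul_assoc, ← hOK, transpose_mul, ← Matrix.mul_assoc, hK't, Matrix.one_mul]
  have hTt : Tᵀ = T := by
    rw [transpose_mul, transpose_transpose, ← hTK, Matrix.mul_assoc, hK, Matrix.mul_one]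
  refine ⟨T, hTt, isUnit_det_of_right_inverse (B := K * O') ?_, ?_, ?_⟩
  · rw [← Matrix.mul_assoc, hTK, hO]
  · calc T * A = K'ᵀ * (O * A * K)ᵀ * K' := by
          rw [hOAK, ← Matrix.mul_assoc, ← Matrix.mul_assoc, Matrix.mul_assoc _ K, hK,
            Matrix.mul_one, Matrix.mul_assoc]
      _ = Aᵀ * (Oᵀ * K') := by
          simp only [transpose_mul, ← Matrix.mul_assoc, hK't, Matrix.one_mul]
      _ = Aᵀ * T := by rw [← hTt, transpose_mul, transpose_transpose]
  · rw [Matrix.mul_assoc, hOB, ← Matrix.mul_assoc, hK't, Matrix.one_mul]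

section StateSpace

variable {F : Type*} [Field F] {n m : ℕ}

theorem obsvMat_mul_pow_mul_ctrbMat_apply (A : Matrix (Fin n) (Fin n) F)
    (B : Matrix (Fin n) (Fin m) F) (C : Matrix (Fin m) (Fin n) F) (j : ℕ)
    (p q : Fin n × Fin m) :
    (obsvMat A C * A ^ j * ctrbMat A B) p q = (C * A ^ (p.1 + j + q.1 : ℕ) * B) p.2 q.2 := by
  rw [pow_add, pow_add, show C * (A ^ (p.1 : ℕ) * A ^ j * A ^ (q.1 : ℕ)) * B
    = C * A ^ (p.1 : ℕ) * A ^ j * (A ^ (q.1 : ℕ) * B) by simp only [Matrix.mul_assoc]]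
  rfl

theorem transpose_obsvMat_mul_pow_mul_ctrbMat (A : Matrix (Fin n) (Fin n) F)
    (B : Matrix (Fin n) (Fin m) F) (C : Matrix (Fin m) (Fin n) F)
    (hmarkov : ∀ k : ℕ, (C * A ^ k * B)ᵀ = C * A ^ k * B) (j : ℕ) :
    (obsvMat A C * A ^ j * ctrbMat A B)ᵀ = obsvMat A C * A ^ j * ctrbMat A B := by
  ext p q
  rw [transpose_apply, obsvMat_mul_pow_mul_ctrbMat_apply, obsvMat_mul_pow_mul_ctrbMat_apply,
    show (q.1 : ℕ) + j + p.1 = p.1 + j + q.1 by ring]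
  exact congrFun (congrFun (hmarkov _) p.2) q.2

theorem obsvMat_mul_eq_transpose_ctrbMat_mul (A : Matrix (Fin n) (Fin n) F)
    (B : Matrix (Fin n) (Fin m) F) (C : Matrix (Fin m) (Fin n) F)
    (hmarkov : ∀ k : ℕ, (C * A ^ k * B)ᵀ = C * A ^ k * B) :
    obsvMat A C * B = (ctrbMat A B)ᵀ * Cᵀ := by
  ext p b
  calc (obsvMat A C * B) p b = (C * A ^ (p.1 : ℕ) * B) p.2 b := rfl
    _ = (C * A ^ (p.1 : ℕ) * B)ᵀ p.2 b := by rw [hmarkov]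
    _ = ((A ^ (p.1 : ℕ) * B)ᵀ * Cᵀ) p.2 b := by rw [Matrix.mul_assoc, transpose_mul]
    _ = ((ctrbMat A B)ᵀ * Cᵀ) p b := rfl

theorem isUnit_det_diagonal_X_sub_map (A : Matrix (Fin n) (Fin n) F) :
    IsUnit ((diagonal fun _ => (RatFunc.X : RatFunc F))
      - A.map (algebraMap F (RatFunc F))).det := by
  have hchar : (diagonal fun _ => (RatFunc.X : RatFunc F)) - A.map (algebraMap F (RatFunc F))
      = (charmatrix A).map (algebraMap (Polynomial F) (RatFunc F)) := by
    ext i j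
    by_cases h : i = j
    · subst h; simp [RatFunc.algebraMap_X, RatFunc.algebraMap_C]
    · simp [charmatrix_apply, diagonal_apply_ne _ h, RatFunc.algebraMap_C]
  rw [hchar, ← RingHom.mapMatrix_apply, ← RingHom.map_det, isUnit_iff_ne_zero,
    map_ne_zero_iff _ (RatFunc.algebraMap_injective F)]
  exact (charpoly_monic A).ne_zero

theorem mul_lamResolvent_mul_eq_mul_pencilResolvent_mul (A : Matrix (Fin n) (Fin n) F)
    (B : Matrix (Fin n) (Fin m) F) (C : Matrix (Fin m) (Fin n) F) {T : Matrix (Fin n) (Fin n) F}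
    (hT : IsUnit T.det) (hTB : T * B = Cᵀ) :
    C.map (algebraMap F (RatFunc F)) * lamResolvent A * B.map (algebraMap F (RatFunc F))
      = C.map (algebraMap F (RatFunc F)) * pencilResolvent T (T * A)
        * (Cᵀ).map (algebraMap F (RatFunc F)) := by
  set φ := algebraMap F (RatFunc F)
  have hpencil : Matrix.of (fun i j => (RatFunc.X : RatFunc F) * φ (T i j) - φ ((T * A) i j))
      = T.map φ * ((diagonal fun _ => (RatFunc.X : RatFunc F)) - A.map φ) := by
    ext i j
    simp [Matrix.mul_sub, RingHom.map_matrix_mul, mul_comm]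
  have hTφ : IsUnit (T.map φ).det := by
    rw [← RingHom.mapMatrix_apply, ← RingHom.map_det]
    exact hT.map φ
  rw [pencilResolvent, hpencil, Matrix.mul_inv_rev, ← hTB, Matrix.map_mul, ← Matrix.mul_assoc,
    Matrix.mul_assoc _ _ (T.map φ), nonsing_inv_mul_cancel_right _ _ hTφ, lamResolvent]

end StateSpace

/-- A symmetric strictly proper rational matrix given by a minimal
state-space realization `G_sp(λ) = C(λI_n−A)⁻¹B` admits a symmetric minimal state-space
realization `G_sp(λ) = W(λS₁ − S₂)⁻¹Wᵀ` with `S₁, S₂` symmetric and `S₁` nonsingular. -/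
theorem exists_symmetric_realization
    {F : Type*} [Field F] {n m : ℕ}
    (A : Matrix (Fin n) (Fin n) F) (B : Matrix (Fin n) (Fin m) F)
    (C : Matrix (Fin m) (Fin n) F)
    (hctrb : (ctrbMat A B).rank = n)
    (hobsv : (obsvMat A C).rank = n)
    (hsym : (C.map (algebraMap F (RatFunc F)) * lamResolvent A *
        B.map (algebraMap F (RatFunc F)))ᵀ
      = C.map (algebraMap F (RatFunc F)) * lamResolvent A *
        B.map (algebraMap F (RatFunc F))) :
    ∃ (W : Matrix (Fin m) (Fin n) F) (S₁ S₂ : Matrix (Fin n) (Fin n) F),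
      S₁ᵀ = S₁ ∧ S₂ᵀ = S₂ ∧ IsUnit S₁.det ∧
      C.map (algebraMap F (RatFunc F)) * lamResolvent A * B.map (algebraMap F (RatFunc F))
        = W.map (algebraMap F (RatFunc F)) * pencilResolvent S₁ S₂ *
            (Wᵀ).map (algebraMap F (RatFunc F)) := by
  classical
  have hX : 1 < RatFunc.inftyValuation F RatFunc.X := by
    rw [RatFunc.inftyValuation.X, ← WithZero.exp_zero, WithZero.exp_lt_exp]
    exact one_pos
  have hmarkov : ∀ k : ℕ, (C * A ^ k * B)ᵀ = C * A ^ k * B :=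
    (RatFunc.inftyValuation F).transpose_mul_pow_mul_eq_self_of_resolvent hX
      (nonsing_inv_mul _ (isUnit_det_diagonal_X_sub_map A)) hsym
  obtain ⟨K', hK'⟩ := (ctrbMat A B).exists_mul_eq_one_of_rank_eq_card
    (by rw [hctrb, Fintype.card_fin])
  obtain ⟨O', hO'⟩ := (obsvMat A C)ᵀ.exists_mul_eq_one_of_rank_eq_card
    (by rw [rank_transpose, hobsv, Fintype.card_fin])
  have hOK := transpose_obsvMat_mul_pow_mul_ctrbMat A B C hmarkov 0
  have hOAK := transpose_obsvMat_mul_pow_mul_ctrbMat A B C hmarkov 1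
  rw [pow_zero, Matrix.mul_one] at hOK
  rw [pow_one] at hOAK
  obtain ⟨T, hTsymm, hTunit, hTA, hTB⟩ := exists_symm_intertwiner_of_hankel hK' hO' hOK hOAK
    (obsvMat_mul_eq_transpose_ctrbMat_mul A B C hmarkov)
  exact ⟨C, T, T * A, hTsymm, by rw [transpose_mul, hTsymm, hTA], hTunit,
    mul_lamResolvent_mul_eq_mul_pencilResolvent_mul A B C hTunit hTB⟩
end

section
/- Let {φ_j(λ)}_{j≥0} ⊂ ℂ[λ] satisfy the three-term recurrence α_j φ_{j+1}(λ) = (λ − β_j)φ_j(λ) − γ_j φ_{j−1}(λ) with REAL coefficients α_j, β_j, γ_j ∈ ℝ, α_j ≠ 0, φ_{−1} = 0, φ_0 = 1. Let k ≥ 2 and let P(λ) = Σ_{i=0}^{k} P_i φ_i(λ) with P_i ∈ ℂ^{m×m} Hermitian (P_i^* = P_i for all i) and P_k ≠ 0. Let L(λ) = λX + Y ∈ ℂ[λ]^{km×km} be a pencil satisfying L(λ)·(Φ_k(λ)⊗I_m) = v ⊗ P(λ) for some v ∈ ℂ^k. Then L(λ) is Hermitian (X^* = X and Y^* = Y) if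 and only if L(λ) is block-symmetric and every coordinate of v is real. In other words, ℍ(P) is exactly the subset of pencils in DM(P) with real ansatz vector. -/
open Matrix

/-- The column vector `Φ_k(λ) ⊗ I_m` as a `km × m` polynomial matrix. -/
noncomputable def phiKron (φ : ℕ → Polynomial ℂ) (k m : ℕ) :
    Matrix (Fin k × Fin m) (Fin m) (Polynomial ℂ) :=
  Matrix.of fun p j => if p.2 = j then φ (k - 1 - (p.1 : ℕ)) else 0

/-- The matrix `v ⊗ I_m ∈ R^{km×m}` built from a vector `v ∈ R^k`. -/
def vKron {R : Type*} [Semiring R] (k m : ℕ) (v : Fin k → R) :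
    Matrix (Fin k × Fin m) (Fin m) R :=
  Matrix.of fun p j => if p.2 = j then v p.1 else 0

/-!
Fix `r, s` and look at the `k × k` block `ℓ = λU + Z` of `L` with entries `L (i, r) (j, s)`; the
ansatz says `ℓ Φ = v p`, where `p` is the `(r, s)` entry of `P(λ)`. The recurrence has real
coefficients, so the `φ_j` are real polynomials with `deg φ_j = j`; as the `P_i` are Hermitian,
conjugating the ansatz of the block `(s, r)` shows that the `(r, s)` block `ℓ'` of `λX^* + Y^*`
satisfies `ℓ'ᵀ Φ = v̄ p`. Two uniqueness facts finish the proof.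
* If `ℓ Φ = v p`, `ℓᵀ Φ = w p` and `p ≠ 0`, then `v = w`: both `Φᵀ v p` and `Φᵀ w p` equal `Φᵀ ℓ Φ`.
* A pencil `ℓ` is determined by `ℓ Φ` and `ℓᵀ Φ`: in two variables,
  `Φ(y)ᵀ ℓ(x) Φ(x) - Φ(y)ᵀ ℓ(y) Φ(x) = (x - y) Φ(y)ᵀ U Φ(x)`, so `ℓ Φ = ℓᵀ Φ = 0` forces `U = 0`
  and then `Z = 0`.

If `L` is Hermitian, then `ℓ' = ℓ`, so `v = v̄`, and `ℓ`, `ℓᵀ` have the same ansatz: `ℓ = ℓᵀ`.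
If `L` is block-symmetric and `v` is real, then `ℓ` and `ℓ'` are symmetric with the same ansatz,
so `ℓ = ℓ'`, i.e. `L` is Hermitian.
-/

open Polynomial Function

section Recurrence

variable {K : Type*} [Field K] {a b c : ℕ → K} {φ : ℕ → K[X]}

theorem degree_eq_of_recurrence (ha : ∀ j, a j ≠ 0) (hφ0 : φ 0 = 1)
    (hrec : ∀ j, C (a j) * φ (j + 1)
      = (X - C (b j)) * φ j - C (c j) * (if j = 0 then 0 else φ (j - 1))) (n : ℕ) :
    (φ n).degree = n := by
  induction n using Nat.strong_induction_on with
  | _ n ih =>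
  match n with
  | 0 => simp [hφ0]
  | j + 1 =>
    have hprev : (if j = 0 then 0 else φ (j - 1)).degree < j + 1 := by
      split_ifs with hj
      · simp
      · rw [ih (j - 1) (by omega)]
        exact_mod_cast (by omega : j - 1 < j + 1)
    have hlow : (C (c j) * (if j = 0 then 0 else φ (j - 1))).degree
        < ((X - C (b j)) * φ j).degree := by
      rw [← smul_eq_C_mul, degree_mul, degree_X_sub_C, ih j (by omega), add_comm]
      exact (degree_smul_le _ _).trans_lt hprev
    rw [← degree_C_mul (ha j), hrec j, degree_sub_eq_left_of_degree_lt hlow, degree_mul,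
      degree_X_sub_C, ih j (by omega), add_comm]
    rfl

end Recurrence

theorem map_conj_eq_self_of_recurrence {α β γ : ℕ → ℝ} (hα : ∀ j, α j ≠ 0) {φ : ℕ → ℂ[X]}
    (hφ0 : φ 0 = 1)
    (hrec : ∀ j, C (α j : ℂ) * φ (j + 1)
      = (X - C (β j : ℂ)) * φ j - C (γ j : ℂ) * (if j = 0 then 0 else φ (j - 1))) (n : ℕ) :
    (φ n).map (starRingEnd ℂ) = φ n := by
  induction n using Nat.strong_induction_on with
  | _ n ih =>
  match n with
  | 0 => simp [hφ0]
  | j + 1 =>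
    refine mul_left_cancel₀ (C_ne_zero.2 (Complex.ofReal_ne_zero.2 (hα j))) ?_
    have hαr : C (α j : ℂ) = (C (α j : ℂ)).map (starRingEnd ℂ) := by simp
    rw [hαr, ← Polynomial.map_mul, ← hαr, hrec j]
    split_ifs with hj <;> simp [ih j (by omega), ih (j - 1) (by omega)]

theorem linearIndependent_of_degree_eq {R : Type*} [CommRing R] [IsDomain R] {φ : ℕ → R[X]}
    (hdeg : ∀ n, (φ n).degree = n) : LinearIndependent R φ :=
  Sequence.linearIndependent ⟨φ, hdeg⟩

section Pencil

variable {R : Type*} [CommRing R] {ι κ : Type*}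

noncomputable def pencil (U Z : Matrix ι κ R) : Matrix ι κ R[X] :=
  of fun i j => X * C (U i j) + C (Z i j)

theorem pencil_transpose (U Z : Matrix ι κ R) : (pencil U Z)ᵀ = pencil Uᵀ Zᵀ := rfl

theorem pencil_submatrix {ι' κ' : Type*} (U Z : Matrix ι κ R) (f : ι' → ι) (g : κ' → κ) :
    (pencil U Z).submatrix f g = pencil (U.submatrix f g) (Z.submatrix f g) := rfl

theorem pencil_sub (U Z U' Z' : Matrix ι κ R) :
    pencil U Z - pencil U' Z' = pencil (U - U') (Z - Z') := by
  refine Matrix.ext fun i j => ?_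
  simp only [pencil, Matrix.sub_apply, of_apply, C_sub]
  ring

theorem pencil_conjTranspose (U Z : Matrix ι κ ℂ) :
    pencil Uᴴ Zᴴ = (pencil U Z)ᵀ.map (mapRingHom (starRingEnd ℂ)) := by
  refine Matrix.ext fun i j => ?_
  simp [pencil]

variable [Fintype ι]

/-- With `x = C X` and `y = X` in `R[X][X]`, this is
`Φ(y)ᵀ ℓ(x) Φ(x) - Φ(y)ᵀ ℓ(y) Φ(x) = (x - y) Φ(y)ᵀ U Φ(x)` for the pencil `ℓ(λ) = λU + Z`. -/
theorem pencil_mulVec_bivariate (U Z : Matrix ι ι R) (Φ : ι → R[X]) :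
    ∑ i, (Φ i).map C * C ((pencil U Z *ᵥ Φ) i)
      - ∑ j, C (Φ j) * (((pencil U Z)ᵀ *ᵥ Φ) j).map C
      = (C X - X) * ∑ i, C (∑ j, C (U i j) * Φ j) * (Φ i).map C := by
  simp only [mulVec, dotProduct, pencil, transpose_apply, of_apply, Polynomial.map_sum,
    Polynomial.map_mul, Polynomial.map_add, map_X, map_C, map_sum, C_mul, C_add, Finset.mul_sum,
    Finset.sum_mul]
  rw [Finset.sum_comm (s := Finset.univ) (t := Finset.univ)
    (f := fun j i => C (Φ j) * ((X * C (C (U i j)) + C (C (Z i j))) * (Φ i).map C)),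
    ← Finset.sum_sub_distrib]
  refine Finset.sum_congr rfl fun i _ => ?_
  rw [← Finset.sum_sub_distrib]
  refine Finset.sum_congr rfl fun j _ => ?_
  ring

variable [IsDomain R] {φ : ℕ → R[X]} (hdeg : ∀ n, (φ n).degree = n) {e : ι → ℕ} (he : Injective e)
include hdeg he

theorem pencil_eq_zero_of_mulVec_eq_zero {U Z : Matrix ι ι R}
    (h : pencil U Z *ᵥ (φ ∘ e) = 0) (hT : (pencil U Z)ᵀ *ᵥ (φ ∘ e) = 0) : U = 0 ∧ Z = 0 := by
  have hind := Fintype.linearIndependent_iff.1 ((linearIndependent_of_degree_eq hdeg).comp e he)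
  have hindC := Fintype.linearIndependent_iff.1 ((linearIndependent_of_degree_eq
    (φ := fun n => (φ n).map C) (by simp [degree_map_eq_of_injective C_injective, hdeg])).comp e he)
  have hU : U = 0 := by
    have key := pencil_mulVec_bivariate U Z (φ ∘ e)
    rw [h, hT] at key
    have hxy : (C X - X : R[X][X]) ≠ 0 := sub_ne_zero.2 (X_ne_C X).symm
    simp only [Pi.zero_apply, C_0, mul_zero, Polynomial.map_zero, Finset.sum_const_zero,
      sub_zero, zero_eq_mul, hxy, false_or] at key
    refine Matrix.ext fun i j => hind (U i) ?_ j
    simpa [smul_eq_C_mul] using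
      hindC (fun i => ∑ j, C (U i j) * φ (e j)) (by simpa [smul_eq_C_mul] using key) i
  subst hU
  refine ⟨rfl, Matrix.ext fun i j => hind (Z i) ?_ j⟩
  simpa [mulVec, dotProduct, pencil, smul_eq_C_mul, mul_comm] using congrFun h i

theorem pencil_eq_of_mulVec_eq {U Z U' Z' : Matrix ι ι R}
    (h : pencil U Z *ᵥ (φ ∘ e) = pencil U' Z' *ᵥ (φ ∘ e))
    (hT : (pencil U Z)ᵀ *ᵥ (φ ∘ e) = (pencil U' Z')ᵀ *ᵥ (φ ∘ e)) : U = U' ∧ Z = Z' := by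
  have := pencil_eq_zero_of_mulVec_eq_zero hdeg he (U := U - U') (Z := Z - Z')
    (by rw [← pencil_sub, sub_mulVec, h, sub_self])
    (by rw [← pencil_sub, transpose_sub, sub_mulVec, hT, sub_self])
  simpa [sub_eq_zero] using this

theorem eq_of_mulVec_eq_of_transpose_mulVec_eq {ℓ : Matrix ι ι R[X]} {v w : ι → R} {p : R[X]}
    (hp : p ≠ 0) (h : ℓ *ᵥ (φ ∘ e) = fun i => C (v i) * p)
    (hT : ℓᵀ *ᵥ (φ ∘ e) = fun i => C (w i) * p) : v = w := by
  have hsymm := dotProduct_mulVec (φ ∘ e) ℓ (φ ∘ e)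
  rw [← mulVec_transpose, h, hT] at hsymm
  have hsum : ∑ i, (v i - w i) • φ (e i) = 0 := by
    refine mul_right_cancel₀ hp ?_
    simp only [dotProduct, Function.comp_apply] at hsymm
    simp only [smul_eq_C_mul, C_sub, sub_mul, Finset.sum_sub_distrib, Finset.sum_mul, zero_mul]
    rw [sub_eq_zero]
    convert hsymm using 2 with i _ <;> ring
  funext i
  exact sub_eq_zero.1 (Fintype.linearIndependent_iff.1
    ((linearIndependent_of_degree_eq hdeg).comp e he) _ hsum i)

end Pencil

/-- `A = Aᴮ`, where the block transpose `Aᴮ` swaps the blocks `A (i, ·) (j, ·)` and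
`A (j, ·) (i, ·)`. -/
def Matrix.IsBlockSymm {ι κ α : Type*} (A : Matrix (ι × κ) (ι × κ) α) : Prop :=
  ∀ i j r s, A (i, r) (j, s) = A (j, r) (i, s)

namespace Matrix.IsBlockSymm

variable {ι κ α β : Type*} {A : Matrix (ι × κ) (ι × κ) α}

theorem transpose (h : A.IsBlockSymm) : Aᵀ.IsBlockSymm := fun i j r s => h j i s r

theorem map (h : A.IsBlockSymm) (f : α → β) : (A.map f).IsBlockSymm := fun i j r s => by
  simp only [map_apply, h i j r s]

end Matrix.IsBlockSymm

theorem Matrix.isBlockSymm_iff_transpose_submatrix {ι κ α : Type*}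
    {A : Matrix (ι × κ) (ι × κ) α} :
    A.IsBlockSymm ↔ ∀ r s, (A.submatrix (·, r) (·, s))ᵀ = A.submatrix (·, r) (·, s) :=
  ⟨fun h r s => Matrix.ext fun i j => h j i r s,
    fun h i j r s => (congrFun (congrFun (h r s) i) j).symm⟩

section Hermitian

variable {ι κ : Type*} [Fintype ι] {φ : ℕ → ℂ[X]} {e : ι → ℕ}
  {X Y : Matrix (ι × κ) (ι × κ) ℂ} {Q : Matrix κ κ ℂ[X]} {v : ι → ℂ}
  (hansatz : ∀ r s, (pencil X Y).submatrix (·, r) (·, s) *ᵥ (φ ∘ e) = fun i => C (v i) * Q r s)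
include hansatz

theorem transpose_submatrix_pencil_conjTranspose_mulVec
    (hreal : ∀ n, (φ n).map (starRingEnd ℂ) = φ n) (hQ : ∀ r s, (Q s r).map (starRingEnd ℂ) = Q r s)
    (r s : κ) :
    ((pencil Xᴴ Yᴴ).submatrix (·, r) (·, s))ᵀ *ᵥ (φ ∘ e) = fun i => C (star v i) * Q r s := by
  funext i
  have hΦ : mapRingHom (starRingEnd ℂ) ∘ (φ ∘ e) = φ ∘ e := funext fun i => hreal (e i)
  rw [pencil_conjTranspose, submatrix_map, ← transpose_map, transpose_submatrix,
    transpose_transpose, ← hΦ, ← RingHom.map_mulVec, hansatz]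
  simp [hQ]

variable (hdeg : ∀ n, (φ n).degree = n) (he : Injective e)
  (hreal : ∀ n, (φ n).map (starRingEnd ℂ) = φ n) (hQ : ∀ r s, (Q s r).map (starRingEnd ℂ) = Q r s)
include hdeg he hreal hQ

theorem isBlockSymm_and_star_eq_of_isHermitian (hQ0 : Q ≠ 0) (hX : X.IsHermitian)
    (hY : Y.IsHermitian) : (pencil X Y).IsBlockSymm ∧ star v = v := by
  have hconj := transpose_submatrix_pencil_conjTranspose_mulVec hansatz hreal hQ
  rw [hX.eq, hY.eq] at hconj
  obtain ⟨r, s, hrs⟩ : ∃ r s, Q r s ≠ 0 := by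
    by_contra! h
    exact hQ0 (Matrix.ext h)
  have hv : v = star v :=
    eq_of_mulVec_eq_of_transpose_mulVec_eq hdeg he hrs (hansatz r s) (hconj r s)
  rw [← hv] at hconj
  refine ⟨isBlockSymm_iff_transpose_submatrix.2 fun r s => ?_, hv.symm⟩
  obtain ⟨hU, hZ⟩ := pencil_eq_of_mulVec_eq hdeg he
    (U := (X.submatrix (·, r) (·, s))ᵀ) (Z := (Y.submatrix (·, r) (·, s))ᵀ)
    (U' := X.submatrix (·, r) (·, s)) (Z' := Y.submatrix (·, r) (·, s))
    ((hconj r s).trans (hansatz r s).symm) ((hansatz r s).trans (hconj r s).symm)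
  rw [pencil_submatrix, pencil_transpose, hU, hZ]

theorem isHermitian_of_isBlockSymm (hL : (pencil X Y).IsBlockSymm) (hv : star v = v) :
    X.IsHermitian ∧ Y.IsHermitian := by
  have hconj := transpose_submatrix_pencil_conjTranspose_mulVec hansatz hreal hQ
  rw [hv] at hconj
  have hL' : (pencil Xᴴ Yᴴ).IsBlockSymm := by
    rw [pencil_conjTranspose]
    exact hL.transpose.map _
  have hblocks : ∀ r s, Xᴴ.submatrix (·, r) (·, s) = X.submatrix (·, r) (·, s)
      ∧ Yᴴ.submatrix (·, r) (·, s) = Y.submatrix (·, r) (·, s) := fun r s =>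
    pencil_eq_of_mulVec_eq hdeg he
      (by rw [← pencil_submatrix, ← isBlockSymm_iff_transpose_submatrix.1 hL' r s, hconj,
        ← hansatz, pencil_submatrix])
      (by rw [← pencil_submatrix, ← pencil_submatrix, hconj,
        isBlockSymm_iff_transpose_submatrix.1 hL r s, hansatz])
  exact ⟨IsHermitian.ext fun ⟨i, r⟩ ⟨j, s⟩ => congrFun (congrFun (hblocks r s).1 i) j,
    IsHermitian.ext fun ⟨i, r⟩ ⟨j, s⟩ => congrFun (congrFun (hblocks r s).2 i) j⟩

end Hermitian

theorem mul_phiKron_apply {k m : ℕ} (φ : ℕ → ℂ[X])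
    (M : Matrix (Fin k × Fin m) (Fin k × Fin m) ℂ[X]) (i : Fin k) (r s : Fin m) :
    (M * phiKron φ k m) (i, r) s = (M.submatrix (·, r) (·, s) *ᵥ fun j => φ (k - 1 - j)) i := by
  simp [mul_apply, phiKron, Fintype.sum_prod_type, mulVec, dotProduct]

theorem vKron_mul_apply {R : Type*} [Semiring R] {k m : ℕ} {n : Type*} [Fintype n]
    (v : Fin k → R) (N : Matrix (Fin m) n R) (i : Fin k) (r : Fin m) (s : n) :
    (vKron k m v * N) (i, r) s = v i * N r s := by
  simp [mul_apply, vKron]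

section MatrixPolynomial

variable {κ : Type*}

theorem sum_map_mul_C_ne_zero {R : Type*} [CommRing R] [IsDomain R] {φ : ℕ → R[X]}
    (hdeg : ∀ n, (φ n).degree = n) {P : ℕ → Matrix κ κ R} {S : Finset ℕ} {n : ℕ} (hn : n ∈ S)
    (hPn : P n ≠ 0) : ∑ i ∈ S, (P i).map (fun a => φ i * C a) ≠ 0 := by
  obtain ⟨r, s, hrs⟩ : ∃ r s, P n r s ≠ 0 := by
    by_contra! h
    exact hPn (Matrix.ext h)
  intro h0
  refine hrs (linearIndependent_iff'.1 (linearIndependent_of_degree_eq hdeg) S (fun i => P i r s)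
    ?_ n hn)
  simpa [Matrix.sum_apply, smul_eq_C_mul, mul_comm] using congrFun (congrFun h0 r) s

theorem map_conj_sum_map_mul_C_apply {φ : ℕ → ℂ[X]} (hreal : ∀ n, (φ n).map (starRingEnd ℂ) = φ n)
    {P : ℕ → Matrix κ κ ℂ} (hP : ∀ n, (P n).IsHermitian) (S : Finset ℕ) (r s : κ) :
    ((∑ i ∈ S, (P i).map (fun a => φ i * C a)) s r).map (starRingEnd ℂ)
      = (∑ i ∈ S, (P i).map (fun a => φ i * C a)) r s := by
  simp only [Matrix.sum_apply, map_apply, Polynomial.map_sum, Polynomial.map_mul, map_C, hreal]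
  exact Finset.sum_congr rfl fun n _ => by rw [starRingEnd_apply, (hP n).apply]

end MatrixPolynomial

theorem hermitian_pencils_eq_DM_real_ansatz_general
    {m k : ℕ}
    (α β γ : ℕ → ℝ) (hα : ∀ j, α j ≠ 0)
    (φ : ℕ → Polynomial ℂ) (hφ0 : φ 0 = 1)
    (hrec : ∀ j : ℕ, Polynomial.C ((α j : ℂ)) * φ (j + 1)
      = (Polynomial.X - Polynomial.C ((β j : ℂ))) * φ j
        - Polynomial.C ((γ j : ℂ)) * (if j = 0 then 0 else φ (j - 1)))
    (P : ℕ → Matrix (Fin m) (Fin m) ℂ) (hPherm : ∀ i, (P i).IsHermitian) (hPk : P k ≠ 0)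
    (X Y : Matrix (Fin k × Fin m) (Fin k × Fin m) ℂ)
    (L : Matrix (Fin k × Fin m) (Fin k × Fin m) (Polynomial ℂ))
    (hL : L = Matrix.of fun p q => Polynomial.X * Polynomial.C (X p q) + Polynomial.C (Y p q))
    (v : Fin k → ℂ)
    (hansatz : L * phiKron φ k m
      = vKron k m (fun i => Polynomial.C (v i)) *
          (∑ i ∈ Finset.range (k + 1), (P i).map (fun a => φ i * Polynomial.C a))) :
    (X.IsHermitian ∧ Y.IsHermitian) ↔
      ((∀ (i j : Fin k) (r s : Fin m), L (i, r) (j, s) = L (j, r) (i, s)) ∧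
        ∀ i, (v i).im = 0) := by
  subst hL
  have hdeg := degree_eq_of_recurrence (a := fun j => (α j : ℂ)) (by simpa using hα) hφ0 hrec
  have hreal := map_conj_eq_self_of_recurrence hα hφ0 hrec
  have he : Injective fun j : Fin k => k - 1 - (j : ℕ) := fun i j h =>
    Fin.ext (by simp only at h; omega)
  have hblock (r s : Fin m) :
      (pencil X Y).submatrix (·, r) (·, s) *ᵥ (φ ∘ fun j : Fin k => k - 1 - (j : ℕ))
        = fun i => C (v i) * (∑ i ∈ Finset.range (k + 1), (P i).map (fun a => φ i * C a)) r s :=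
    funext fun i => (mul_phiKron_apply φ _ i r s).symm.trans
      ((congrFun (congrFun hansatz (i, r)) s).trans (vKron_mul_apply _ _ i r s))
  have hQ := map_conj_sum_map_mul_C_apply hreal hPherm (Finset.range (k + 1))
  have hQ0 := sum_map_mul_C_ne_zero hdeg (Finset.self_mem_range_succ k) hPk
  have hvreal : star v = v ↔ ∀ i, (v i).im = 0 :=
    funext_iff.trans (forall_congr' fun _ => Complex.conj_eq_iff_im)
  rw [← hvreal]
  exact ⟨fun ⟨hX, hY⟩ => isBlockSymm_and_star_eq_of_isHermitian hblock hdeg he hreal hQ hQ0 hX hY,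
    fun ⟨hL, hv⟩ => isHermitian_of_isBlockSymm hblock hdeg he hreal hQ hL hv⟩

/-- Let `{φ_j} ⊂ ℂ[λ]` satisfy a three-term recurrence with *real*
coefficients, and let `P(λ) = Σ_{i=0}^{k} P_i φ_i(λ)` with all `P_i` Hermitian and `P_k ≠ 0`.
A pencil `L(λ) = λX + Y` with `L(λ)(Φ_k(λ)⊗I_m) = v ⊗ P(λ)` is Hermitian iff it is
block-symmetric and all coordinates of `v` are real: `ℍ(P)` is the subset of pencils in
`𝔻𝕄(P)` with real ansatz vector. -/
theorem hermitian_pencils_eq_DM_real_ansatz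
    {m k : ℕ} (hk : 2 ≤ k)
    (α β γ : ℕ → ℝ) (hα : ∀ j, α j ≠ 0)
    (φ : ℕ → Polynomial ℂ) (hφ0 : φ 0 = 1)
    (hrec : ∀ j : ℕ, Polynomial.C ((α j : ℂ)) * φ (j + 1)
      = (Polynomial.X - Polynomial.C ((β j : ℂ))) * φ j
        - Polynomial.C ((γ j : ℂ)) * (if j = 0 then 0 else φ (j - 1)))
    (P : ℕ → Matrix (Fin m) (Fin m) ℂ) (hPherm : ∀ i, (P i).IsHermitian) (hPk : P k ≠ 0)
    (X Y : Matrix (Fin k × Fin m) (Fin k × Fin m) ℂ)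
    (L : Matrix (Fin k × Fin m) (Fin k × Fin m) (Polynomial ℂ))
    (hL : L = Matrix.of fun p q => Polynomial.X * Polynomial.C (X p q) + Polynomial.C (Y p q))
    (v : Fin k → ℂ)
    (hansatz : L * phiKron φ k m
      = vKron k m (fun i => Polynomial.C (v i)) *
          (∑ i ∈ Finset.range (k + 1), (P i).map (fun a => φ i * Polynomial.C a))) :
    (X.IsHermitian ∧ Y.IsHermitian) ↔
      ((∀ (i j : Fin k) (r s : Fin m), L (i, r) (j, s) = L (j, r) (i, s)) ∧
        ∀ i, (v i).im = 0) :=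
  hermitian_pencils_eq_DM_real_ansatz_general α β γ hα φ hφ0 hrec P hPherm hPk X Y L hL v hansatz
end
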